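/- Under the kernel source condition with index function ξ, the regularized Christoffel function is bounded by c² ξ(λ)²/λ whenever ξ² is covered by qualification 1: if K(·,x) = ξ(A)v_x with ‖v_x‖ ≤ c for all x, A = J_S* J_S positive self-adjoint, and t ↦ t/ξ²(t) is non-decreasing on (0, ‖A‖], then C_λ(x) = ‖(λI + A)^{-1/2} K(·,x)‖²_{H_K} ≤ c² ξ²(λ)/λ for all λ ∈ (0, ‖A‖] and all x ∈ X. -/

import Mathlib

/-- Under the kernel source condition with index function `ξ`, the
regularized Christoffel function is bounded by `c² ξ(λ)²/λ` whenever `ξ²` is covered by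
qualification 1: if `K(·,x) = ξ(A) v_x` with `‖v_x‖ ≤ c` for all `x`, `A = J_S* J_S`
positive self-adjoint, and `t ↦ t/ξ²(t)` is non-decreasing on `(0, ‖A‖]`, then
`C_λ(x) = ‖(λI + A)^{-1/2} K(·,x)‖² ≤ c² ξ²(λ)/λ` for all `λ ∈ (0, ‖A‖]` and all `x`.
Functions of `A` are taken via the continuous functional calculus. -/
theorem regularized_christoffel_function_bound
    {X : Type*} {H : Type*} [NormedAddCommGroup H] [InnerProductSpace ℂ H]
    [CompleteSpace H]
    (A : H →L[ℂ] H) (hA : A.IsPositive)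
    (ξ : ℝ → ℝ) (hξcont : ContinuousOn ξ (Set.Icc 0 ‖A‖)) (hξmono : MonotoneOn ξ (Set.Icc 0 ‖A‖))
    (hξ0 : ξ 0 = 0) (hξpos : ∀ t ∈ Set.Ioc (0 : ℝ) ‖A‖, 0 < ξ t)
    (hcov : MonotoneOn (fun t => t / ξ t ^ 2) (Set.Ioc (0 : ℝ) ‖A‖))
    (c : ℝ) (kx : X → H) (v : X → H)
    (hsrc : ∀ x : X, kx x = cfc ξ A (v x)) (hv : ∀ x : X, ‖v x‖ ≤ c) :
    ∀ lam ∈ Set.Ioc (0 : ℝ) ‖A‖, ∀ x : X,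
      ‖cfc (fun t : ℝ => (Real.sqrt (lam + t))⁻¹) A (kx x)‖ ^ 2
        ≤ c ^ 2 * ξ lam ^ 2 / lam := by
  intro lam hlam x
  obtain ⟨hlam0, hlamA⟩ := hlam
  rcases subsingleton_or_nontrivial H with hH | hH
  · exact absurd (hlamA.trans_eq (by rw [Subsingleton.elim A 0, norm_zero])) hlam0.not_ge
  have hAsa : IsSelfAdjoint A := hA.isSelfAdjoint
  have hspec : spectrum ℝ A ⊆ Set.Icc 0 ‖A‖ := by
    intro t ht
    refine ⟨SpectrumRestricts.nnreal_iff.mp hA.spectrumRestricts t ht, ?_⟩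
    have := spectrum.norm_le_norm_of_mem ht
    rw [Real.norm_eq_abs] at this
    exact (le_abs_self t).trans this
  set g : ℝ → ℝ := fun t => (Real.sqrt (lam + t))⁻¹ with hg
  have hgcont : ContinuousOn g (spectrum ℝ A) := by
    refine ContinuousOn.inv₀ (Continuous.continuousOn (by continuity)) ?_
    intro t ht
    have h0 : 0 ≤ t := (hspec ht).1
    positivity
  have hξcont' : ContinuousOn ξ (spectrum ℝ A) := hξcont.mono hspec
  have hξlam : 0 < ξ lam := hξpos lam ⟨hlam0, hlamA⟩
  have hslam : 0 < Real.sqrt lam := Real.sqrt_pos.mpr hlam0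
  have key : cfc g A (kx x) = cfc (fun t => g t * ξ t) A (v x) := by
    rw [hsrc x, ← ContinuousLinearMap.mul_apply, ← cfc_mul g ξ A hgcont hξcont']
  -- scalar bound
  have hbound : ∀ t ∈ spectrum ℝ A, ‖g t * ξ t‖ ≤ ξ lam / Real.sqrt lam := by
    intro t ht
    obtain ⟨ht0, htA⟩ := hspec ht
    have hξt0 : 0 ≤ ξ t := by
      have := hξmono (Set.left_mem_Icc.mpr (norm_nonneg A)) ⟨ht0, htA⟩ ht0
      rwa [hξ0] at this
    have hgt0 : 0 ≤ g t := by
      simp only [hg]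
      positivity
    rw [Real.norm_eq_abs, abs_of_nonneg (mul_nonneg hgt0 hξt0)]
    rcases eq_or_lt_of_le ht0 with h0 | htpos
    · rw [← h0, hξ0, mul_zero]
      positivity
    -- now t > 0 ; prove the squared inequality
    have hlt : 0 < lam + t := by linarith
    have h2 : ξ t ^ 2 / (lam + t) ≤ ξ lam ^ 2 / lam := by
      rcases le_total t lam with hcase | hcase
      · have hmono := hξmono ⟨ht0, htA⟩ ⟨hlam0.le, hlamA⟩ hcase
        exact div_le_div₀ (by positivity) (by nlinarith) hlam0 (by linarith)
      · have hc1 := hcov ⟨hlam0, hlamA⟩ ⟨htpos, htA⟩ hcase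
        have hξtpos : 0 < ξ t := hξpos t ⟨htpos, htA⟩
        have hm : lam * ξ t ^ 2 ≤ t * ξ lam ^ 2 := by
          rw [div_le_div_iff₀ (by positivity) (by positivity)] at hc1
          linarith
        have h3 : ξ t ^ 2 / t ≤ ξ lam ^ 2 / lam := by
          rw [div_le_div_iff₀ htpos hlam0]; linarith
        exact le_trans (div_le_div_of_nonneg_left (by positivity) htpos (by linarith)) h3
    -- take square roots
    have hsq : (g t * ξ t) ^ 2 ≤ (ξ lam / Real.sqrt lam) ^ 2 := by
      have e1 : (g t * ξ t) ^ 2 = ξ t ^ 2 / (lam + t) := by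
        rw [hg, mul_pow, inv_pow, Real.sq_sqrt hlt.le, inv_mul_eq_div]
      have e2 : (ξ lam / Real.sqrt lam) ^ 2 = ξ lam ^ 2 / lam := by
        rw [div_pow, Real.sq_sqrt hlam0.le]
      rw [e1, e2]; exact h2
    calc g t * ξ t = Real.sqrt ((g t * ξ t) ^ 2) := (Real.sqrt_sq (by positivity)).symm
      _ ≤ Real.sqrt ((ξ lam / Real.sqrt lam) ^ 2) := Real.sqrt_le_sqrt hsq
      _ = ξ lam / Real.sqrt lam := Real.sqrt_sq (by positivity)
  have hc0 : 0 ≤ c := le_trans (norm_nonneg _) (hv x)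
  have hopnorm : ‖cfc (fun t => g t * ξ t) A‖ ≤ ξ lam / Real.sqrt lam :=
    norm_cfc_le (by positivity) hbound
  have hfinal : ‖cfc g A (kx x)‖ ≤ ξ lam / Real.sqrt lam * c := by
    rw [key]
    calc ‖cfc (fun t => g t * ξ t) A (v x)‖
        ≤ ‖cfc (fun t => g t * ξ t) A‖ * ‖v x‖ := ContinuousLinearMap.le_opNorm _ _
      _ ≤ ξ lam / Real.sqrt lam * c :=
          mul_le_mul hopnorm (hv x) (norm_nonneg _) (by positivity)
  calc ‖cfc g A (kx x)‖ ^ 2 ≤ (ξ lam / Real.sqrt lam * c) ^ 2 := by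
        exact pow_le_pow_left₀ (norm_nonneg _) hfinal 2
    _ = c ^ 2 * ξ lam ^ 2 / lam := by
        rw [mul_pow, div_pow, Real.sq_sqrt hlam0.le]; ring
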